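/- arXiv:0807.4694 — 2 statements merged into one kernel-verified Lean document; each statement's English description precedes it below -/
import Mathlib

section
/- Let L be an even lattice all of whose elementary divisors are powers of a prime ℓ, let r be its rank and e(L) the sum of its elementary divisors, and let d be its determinant. If d is a perfect square then e(L)/2 ≡ r/2 mod (ℓ-1), and otherwise e(L)/2 ≡ (r + ℓ - 1)/2 mod (ℓ-1). -/
/-!
Because `U * G * W` is the diagonal matrix of elementary divisors and `U`, `W` are unimodular,
`det G = ±ℓ ^ k` with `k = ∑ αᵢ`; positive definiteness fixes the sign (over `ℝ` the form is
positive semidefinite by density of `ℚⁿ`), so `det G` is a square exactly when `k` is even.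
For odd `ℓ` one has `ℓ ^ a ≡ 1 + a (ℓ - 1) mod 2 (ℓ - 1)`, hence `e ≡ r + k (ℓ - 1)`, and
`k (ℓ - 1)` is `0` or `ℓ - 1` modulo `2 (ℓ - 1)` according to the parity of `k`.
-/

open Matrix

theorem Int.pow_modEq_one_add_mul_sub_one {x : ℤ} (hx : Odd x) (a : ℕ) :
    x ^ a ≡ 1 + a * (x - 1) [ZMOD 2 * (x - 1)] := by
  obtain ⟨s, rfl⟩ := hx
  induction a with
  | zero => simp
  | succ n ih =>
    calc (2 * s + 1) ^ (n + 1) = (2 * s + 1) * (2 * s + 1) ^ n := by ring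
      _ ≡ (2 * s + 1) * (1 + n * (2 * s + 1 - 1)) [ZMOD 2 * (2 * s + 1 - 1)] := ih.mul_left _
      _ ≡ 1 + ↑(n + 1) * (2 * s + 1 - 1) [ZMOD 2 * (2 * s + 1 - 1)] :=
        Int.modEq_iff_dvd.mpr ⟨-(n * s), by push_cast; ring⟩

theorem Nat.Prime.isSquare_pow_iff {p : ℕ} (hp : p.Prime) {k : ℕ} :
    IsSquare (p ^ k) ↔ Even k := by
  refine ⟨fun ⟨a, ha⟩ => ?_, fun hk => hk.isSquare_pow p⟩
  obtain ⟨j, -, rfl⟩ := (Nat.dvd_prime_pow hp).mp (Dvd.intro a ha.symm)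
  rw [← pow_add] at ha
  exact ⟨j, Nat.pow_right_injective hp.two_le ha⟩

namespace Matrix

variable {n : Type*} [Fintype n]

theorem natAbs_det_eq_of_mul_mul_eq [DecidableEq n] {U G W D : Matrix n n ℤ}
    (hU : IsUnit U.det) (hW : IsUnit W.det) (h : U * G * W = D) :
    G.det.natAbs = D.det.natAbs := by
  rw [← h, det_mul, det_mul, Int.natAbs_mul, Int.natAbs_mul,
    Int.isUnit_iff_natAbs_eq.mp hU, Int.isUnit_iff_natAbs_eq.mp hW, one_mul, mul_one]

-- Clear denominators: `b • q` is integral for some `b ≠ 0`, and the form scales by `b ^ 2`.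
theorem dotProduct_mulVec_intCast_nonneg {G : Matrix n n ℤ} (hG : ∀ v, 0 ≤ v ⬝ᵥ G *ᵥ v)
    (q : n → ℚ) : 0 ≤ q ⬝ᵥ G.map (↑) *ᵥ q := by
  obtain ⟨⟨b, hb⟩, hbq⟩ := IsLocalization.exist_integer_multiples_of_finite (nonZeroDivisors ℤ) q
  choose v hv using hbq
  have hbv : (Int.cast ∘ v : n → ℚ) = (b : ℚ) • q := by
    ext i; simpa [zsmul_eq_mul] using hv i
  have hmv : (Int.cast ∘ (G *ᵥ v) : n → ℚ) = G.map (↑) *ᵥ (Int.cast ∘ v) := by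
    ext i; exact RingHom.map_mulVec (Int.castRingHom ℚ) G v i
  have hscale : ((v ⬝ᵥ G *ᵥ v : ℤ) : ℚ) = (b : ℚ) ^ 2 * (q ⬝ᵥ G.map (↑) *ᵥ q) := by
    rw [← eq_intCast (Int.castRingHom ℚ), RingHom.map_dotProduct]
    simp only [Int.coe_castRingHom, hmv, hbv, mulVec_smul, dotProduct_smul, smul_dotProduct,
      smul_eq_mul]
    ring
  have hb0 : (0 : ℚ) < (b : ℚ) ^ 2 := by
    have := nonZeroDivisors.ne_zero hb
    positivity
  exact nonneg_of_mul_nonneg_right (hscale ▸ Int.cast_nonneg (hG v)) hb0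

theorem posSemidef_map_ratCast {G : Matrix n n ℚ} (hsymm : G.IsSymm)
    (hG : ∀ q, 0 ≤ q ⬝ᵥ G *ᵥ q) : (G.map ((↑) : ℚ → ℝ)).PosSemidef := by
  refine posSemidef_iff_dotProduct_mulVec.mpr ⟨?_, fun x => ?_⟩
  · rw [IsHermitian, conjTranspose_eq_transpose_of_trivial]
    exact hsymm.map _
  · rw [star_trivial]
    refine (DenseRange.piMap fun _ => Rat.denseRange_cast).induction_on x
      (isClosed_le continuous_const (by fun_prop)) fun q => ?_
    have hmv : ((↑) : ℚ → ℝ) ∘ (G *ᵥ q) = G.map (↑) *ᵥ (((↑) : ℚ → ℝ) ∘ q) := by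
      ext i; exact RingHom.map_mulVec (Rat.castHom ℝ) G q i
    change 0 ≤ ((↑) : ℚ → ℝ) ∘ q ⬝ᵥ G.map (↑) *ᵥ (((↑) : ℚ → ℝ) ∘ q)
    rw [← hmv, ← Rat.coe_castHom, ← RingHom.map_dotProduct]
    exact Rat.cast_nonneg.mpr (hG q)

theorem det_nonneg_of_dotProduct_mulVec_nonneg [DecidableEq n] {G : Matrix n n ℤ}
    (hsymm : G.IsSymm) (hG : ∀ v, 0 ≤ v ⬝ᵥ G *ᵥ v) : 0 ≤ G.det := by
  have hR : (G.map ((↑) : ℤ → ℝ)).PosSemidef := by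
    simpa [map_map, Function.comp_def] using
      posSemidef_map_ratCast (hsymm.map _) (dotProduct_mulVec_intCast_nonneg hG)
  have hdet : ((G.det : ℤ) : ℝ) = (G.map (↑)).det := RingHom.map_det (Int.castRingHom ℝ) G
  exact_mod_cast hdet ▸ hR.det_nonneg

end Matrix

theorem sum_elementary_divisors_mod_general
    (ℓ : ℕ) (hℓ : ℓ.Prime) (hodd : Odd ℓ)
    (r : ℕ) (α : Fin r → ℕ)
    (G : Matrix (Fin r) (Fin r) ℤ)
    (hsymm : G.IsSymm)
    (hpos : ∀ v : Fin r → ℤ, v ≠ 0 → 0 < dotProduct v (G.mulVec v))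
    (hsmith : ∃ U W : Matrix (Fin r) (Fin r) ℤ, IsUnit U.det ∧ IsUnit W.det ∧
      U * G * W = Matrix.diagonal fun i => (ℓ : ℤ) ^ α i) :
    (IsSquare G.det →
      ((∑ i, ℓ ^ α i : ℕ) : ℤ) ≡ (r : ℤ) [ZMOD (2 * ((ℓ : ℤ) - 1))]) ∧
    (¬ IsSquare G.det →
      ((∑ i, ℓ ^ α i : ℕ) : ℤ) ≡ (r : ℤ) + (ℓ : ℤ) - 1 [ZMOD (2 * ((ℓ : ℤ) - 1))]) := by
  obtain ⟨U, W, hU, hW, hUGW⟩ := hsmith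
  set k := ∑ i, α i
  have hdet : G.det = ((ℓ ^ k : ℕ) : ℤ) := by
    have hnonneg := det_nonneg_of_dotProduct_mulVec_nonneg hsymm fun v => by
      rcases eq_or_ne v 0 with rfl | hv
      exacts [by simp, (hpos v hv).le]
    rw [← Int.natAbs_of_nonneg hnonneg, natAbs_det_eq_of_mul_mul_eq hU hW hUGW, det_diagonal,
      Finset.prod_pow_eq_pow_sum]
    simp [k]
  have hsq : IsSquare G.det ↔ Even k := by
    rw [hdet, Int.isSquare_natCast_iff, hℓ.isSquare_pow_iff]
  have hcong : ((∑ i, ℓ ^ α i : ℕ) : ℤ) ≡ r + k * (ℓ - 1) [ZMOD 2 * (ℓ - 1)] := by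
    have := Int.ModEq.sum (s := Finset.univ) fun i _ =>
      Int.pow_modEq_one_add_mul_sub_one ((Int.odd_coe_nat ℓ).mpr hodd) (α i)
    simpa [Finset.sum_add_distrib, Finset.sum_mul, k] using this
  rcases Nat.even_or_odd' k with ⟨t, hk | hk⟩
  · refine ⟨fun _ => hcong.trans (Int.modEq_iff_dvd.mpr ⟨-t, ?_⟩),
      fun h => (h (hsq.mpr ⟨t, by omega⟩)).elim⟩
    rw [hk]; push_cast; ring
  · refine ⟨fun h => absurd (hsq.mp h) (Nat.not_even_iff_odd.mpr ⟨t, hk⟩),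
      fun _ => hcong.trans (Int.modEq_iff_dvd.mpr ⟨-t, ?_⟩)⟩
    rw [hk]; push_cast; ring

/-- For an even lattice (given by a Gram matrix `G`) whose elementary divisors
are the prime powers `ℓ ^ α i`, with rank `r`, determinant `d = det G` and
`e = Σ ℓ ^ α i` the sum of the elementary divisors: if `d` is a perfect square then
`e/2 ≡ r/2 (mod ℓ-1)`, otherwise `e/2 ≡ (r + ℓ - 1)/2 (mod ℓ-1)`.  Since `e` and `r`
are even, these congruences are stated in the equivalent form
`e ≡ r (mod 2(ℓ-1))`, resp. `e ≡ r + ℓ - 1 (mod 2(ℓ-1))`. -/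
theorem sum_elementary_divisors_mod
    (ℓ : ℕ) (hℓ : ℓ.Prime) (hodd : Odd ℓ)
    (r : ℕ) (α : Fin r → ℕ)
    (G : Matrix (Fin r) (Fin r) ℤ)
    (hsymm : G.IsSymm)
    (hpos : ∀ v : Fin r → ℤ, v ≠ 0 → 0 < dotProduct v (G.mulVec v))
    (heven : ∀ i, 2 ∣ G i i)
    (hsmith : ∃ U W : Matrix (Fin r) (Fin r) ℤ, IsUnit U.det ∧ IsUnit W.det ∧
      U * G * W = Matrix.diagonal fun i => (ℓ : ℤ) ^ α i) :
    (IsSquare G.det →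
      ((∑ i, ℓ ^ α i : ℕ) : ℤ) ≡ (r : ℤ) [ZMOD (2 * ((ℓ : ℤ) - 1))]) ∧
    (¬ IsSquare G.det →
      ((∑ i, ℓ ^ α i : ℕ) : ℤ) ≡ (r : ℤ) + (ℓ : ℤ) - 1 [ZMOD (2 * ((ℓ : ℤ) - 1))]) :=
  sum_elementary_divisors_mod_general ℓ hℓ hodd r α G hsymm hpos hsmith
end

section
/- Let ℓ ≥ 5 be a prime and D a negative fundamental discriminant having a prime factor different from ℓ. Then there exists a prime p with Legendre symbol (D/p) = +1, (p/ℓ) = -1, and p ≢ -1 mod ℓ. -/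
/-- `D` is a fundamental discriminant: either `D ≡ 1 (mod 4)` and `D` is squarefree, or
`D ≡ 0 (mod 4)`, `D/4` is squarefree and `D/4 ≡ 2` or `3 (mod 4)`. -/
def IsFundamentalDiscriminant (D : ℤ) : Prop :=
  (D % 4 = 1 ∧ Squarefree D) ∨
    (D % 4 = 0 ∧ Squarefree (D / 4) ∧ (D / 4 % 4 = 2 ∨ D / 4 % 4 = 3))

private lemma isUnit_pair' {M N : Type*} [Monoid M] [Monoid N] {x : M} {y : N}
    (hx : IsUnit x) (hy : IsUnit y) : IsUnit ((x, y) : M × N) := by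
  obtain ⟨u, rfl⟩ := hx; obtain ⟨v, rfl⟩ := hy
  exact ⟨⟨(u, v), ((u⁻¹ : Mˣ), (v⁻¹ : Nˣ)), by simp [Prod.ext_iff], by simp [Prod.ext_iff]⟩, rfl⟩

private lemma crt_components {n m : ℕ} (h : Nat.Coprime n m) {p : ℕ} {x : ZMod n} {y : ZMod m}
    (hp : (p : ZMod (n * m)) = (ZMod.chineseRemainder h).symm (x, y)) :
    (p : ZMod n) = x ∧ (p : ZMod m) = y := by
  have h2 : (ZMod.chineseRemainder h) (p : ZMod (n * m)) = (x, y) := by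
    rw [hp, RingEquiv.apply_symm_apply]
  have h3 : (ZMod.chineseRemainder h) ((p : ℕ) : ZMod (n * m)) =
      ((p : ZMod n), (p : ZMod m)) := by
    rw [map_natCast]
    exact Prod.ext (Prod.fst_natCast p) (Prod.snd_natCast p)
  rw [h3] at h2
  exact ⟨congrArg Prod.fst h2, congrArg Prod.snd h2⟩

private lemma exists_good_nonresidue (ℓ : ℕ) (hℓ5 : 5 ≤ ℓ) [Fact ℓ.Prime] :
    ∃ b : ZMod ℓ, quadraticChar (ZMod ℓ) b = -1 ∧ b ≠ -1 := by
  have hchar : ringChar (ZMod ℓ) ≠ 2 := by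
    rw [ZMod.ringChar_zmod_n]; omega
  obtain ⟨n, hn⟩ := quadraticChar_exists_neg_one (F := ZMod ℓ) hchar
  by_cases h : n = -1
  · have h2 : (2 : ZMod ℓ) ≠ 0 := by
      have : ((2 : ℕ) : ZMod ℓ) ≠ 0 := by
        rw [Ne, ZMod.natCast_eq_zero_iff]
        intro hd; have := Nat.le_of_dvd (by norm_num) hd; omega
      simpa using this
    refine ⟨-4, ?_, ?_⟩
    · have h4 : (-4 : ZMod ℓ) = (-1) * 2 ^ 2 := by ring
      rw [h4, map_mul, quadraticChar_sq_one' h2, mul_one, ← h, hn]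
    · intro hc
      have h3 : ((3 : ℕ) : ZMod ℓ) = 0 := by push_cast; linear_combination -hc
      rw [ZMod.natCast_eq_zero_iff] at h3
      have := Nat.le_of_dvd (by norm_num) h3; omega
  · exact ⟨n, hn, h⟩

private lemma assemble (ℓ : ℕ) (hℓ : ℓ.Prime) [Fact ℓ.Prime] (D : ℤ) {b : ZMod ℓ}
    (hb1 : quadraticChar (ZMod ℓ) b = -1) (hb2 : b ≠ -1)
    (N : ℕ) (hN : N ≠ 0) (a : ZMod N) (ha : IsUnit a)
    (H : ∀ p : ℕ, p.Prime → 2 < p → (p : ZMod N) = a →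
      jacobiSym D p = 1 ∧ (p : ZMod ℓ) = b) :
    ∃ p : ℕ, ∃ hp : p.Prime,
      @legendreSym p ⟨hp⟩ D = 1 ∧
      @legendreSym ℓ ⟨hℓ⟩ (p : ℤ) = -1 ∧
      ¬ ((p : ℤ) ≡ -1 [ZMOD (ℓ : ℤ)]) := by
  haveI : NeZero N := ⟨hN⟩
  obtain ⟨p, hp2, pp, hpa⟩ := Nat.forall_exists_prime_gt_and_eq_mod (q := N) ha 2
  obtain ⟨hJ, hmod⟩ := H p pp hp2 hpa
  haveI : Fact p.Prime := ⟨pp⟩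
  refine ⟨p, pp, ?_, ?_, ?_⟩
  · rw [jacobiSym.legendreSym.to_jacobiSym]; exact hJ
  · show quadraticChar (ZMod ℓ) ((p : ℤ) : ZMod ℓ) = -1
    rwa [Int.cast_natCast, hmod]
  · intro hc
    have h1 : ((p : ℤ) : ZMod ℓ) = ((-1 : ℤ) : ZMod ℓ) :=
      (ZMod.intCast_eq_intCast_iff _ _ _).mpr hc
    rw [Int.cast_natCast, hmod] at h1
    apply hb2
    rw [h1]; push_cast; ring

private lemma decomp {D : ℤ} (hD : IsFundamentalDiscriminant D) :
    ∃ e m : ℕ, (e = 0 ∨ e = 2 ∨ e = 3) ∧ Odd m ∧ Squarefree m ∧ D.natAbs = 2 ^ e * m := by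
  rcases hD with ⟨h1, hsq⟩ | ⟨h0, hsq, h23⟩
  · refine ⟨0, D.natAbs, Or.inl rfl, ?_, Int.squarefree_natAbs.mpr hsq, by ring⟩
    rw [Int.natAbs_odd, Int.odd_iff]; omega
  · rcases h23 with h2 | h3
    · refine ⟨3, ((D / 4) / 2).natAbs, Or.inr (Or.inr rfl), ?_, ?_, ?_⟩
      · rw [Int.natAbs_odd, Int.odd_iff]; omega
      · exact Int.squarefree_natAbs.mpr (Squarefree.squarefree_of_dvd ⟨2, by omega⟩ hsq)
      · have h8 : D = 8 * ((D / 4) / 2) := by omega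
        calc D.natAbs = (8 * ((D / 4) / 2)).natAbs := by rw [← h8]
          _ = 2 ^ 3 * ((D / 4) / 2).natAbs := by rw [Int.natAbs_mul]; norm_num
    · refine ⟨2, (D / 4).natAbs, Or.inr (Or.inl rfl), ?_, Int.squarefree_natAbs.mpr hsq, ?_⟩
      · rw [Int.natAbs_odd, Int.odd_iff]; omega
      · have h4 : D = 4 * (D / 4) := by omega
        calc D.natAbs = (4 * (D / 4)).natAbs := by rw [← h4]
          _ = 2 ^ 2 * (D / 4).natAbs := by rw [Int.natAbs_mul]; norm_num

/-- For a prime `ℓ ≥ 5` and a negative fundamental discriminant `D` with a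
prime factor different from `ℓ`, there is a prime `p` with `(D/p) = +1`, `(p/ℓ) = -1` and
`p ≢ -1 (mod ℓ)`. -/
theorem exists_prime_split_nonresidue
    (ℓ : ℕ) (hℓ : ℓ.Prime) (hℓ5 : 5 ≤ ℓ)
    (D : ℤ) (hDneg : D < 0) (hDfund : IsFundamentalDiscriminant D)
    (hfac : ∃ q : ℕ, q.Prime ∧ (q : ℤ) ∣ D ∧ q ≠ ℓ) :
    ∃ p : ℕ, ∃ hp : p.Prime,
      @legendreSym p ⟨hp⟩ D = 1 ∧
      @legendreSym ℓ ⟨hℓ⟩ (p : ℤ) = -1 ∧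
      ¬ ((p : ℤ) ≡ -1 [ZMOD (ℓ : ℤ)]) := by
  haveI : Fact ℓ.Prime := ⟨hℓ⟩
  have hDne : D ≠ 0 := hDneg.ne
  have hD1 : 1 ≤ D.natAbs := Int.natAbs_pos.mpr hDne
  obtain ⟨b, hb1, hb2⟩ := exists_good_nonresidue ℓ hℓ5
  have hb0 : b ≠ 0 := by intro h; rw [h] at hb1; simp at hb1
  by_cases hld : (ℓ : ℤ) ∣ D
  · -- Case B : ℓ ∣ D
    obtain ⟨e, m, he, hmodd, hmsq, habs⟩ := decomp hDfund
    have hlodd : Odd ℓ := hℓ.odd_of_ne_two (by omega)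
    have hlm : ℓ ∣ m := by
      have h1 : ℓ ∣ D.natAbs := by
        have h0 := Int.natAbs_dvd_natAbs.mpr hld
        simpa using h0
      rw [habs] at h1
      rcases (Nat.Prime.dvd_mul hℓ).mp h1 with h2 | h2
      · exfalso
        have h3 := Nat.le_of_dvd (by norm_num) (hℓ.dvd_of_dvd_pow h2)
        omega
      · exact h2
    obtain ⟨m', rfl⟩ := hlm
    have hm'odd : Odd m' := (Nat.odd_mul.mp hmodd).2
    have hm'0 : m' ≠ 0 := by
      rintro rfl
      rw [mul_zero, mul_zero] at habs
      omega
    have hm'sq : Squarefree m' := Squarefree.squarefree_of_dvd (Dvd.intro_left ℓ rfl) hmsq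
    have hldm' : ¬ ℓ ∣ m' := fun h => hℓ.not_isUnit (hmsq ℓ (mul_dvd_mul_left ℓ h))
    have hDabs : (D.natAbs : ℤ) = -D := by omega
    by_cases hm1 : m' = 1
    · -- B2 : D = -2^e * ℓ
      subst hm1
      rw [mul_one] at habs
      have he23 : e = 2 ∨ e = 3 := by
        rcases he with rfl | rfl | rfl
        · exfalso
          obtain ⟨q, hq, hqD, hqne⟩ := hfac
          have h1 : q ∣ D.natAbs := by simpa using Int.natAbs_dvd_natAbs.mpr hqD
          rw [habs, pow_zero, one_mul] at h1
          exact hqne ((Nat.prime_dvd_prime_iff_eq hq hℓ).mp h1)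
        · exact Or.inl rfl
        · exact Or.inr rfl
      have hcop8 : Nat.Coprime 8 ℓ := by
        have h1 : Nat.Coprime 2 ℓ := Nat.coprime_two_left.mpr hlodd
        exact (show (8:ℕ) = 2 ^ 3 by norm_num) ▸ h1.pow_left 3
      have hDval : D = (-1) * ((2:ℤ) ^ e * (ℓ : ℤ)) := by
        have h1 : (D.natAbs : ℤ) = (2:ℤ) ^ e * (ℓ : ℤ) := by
          rw [habs]; push_cast; ring
        rw [h1] at hDabs; linarith
      rcases he23 with rfl | rfl
      · -- e = 2, need ℓ % 4 = 1, use p ≡ 3 mod 8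
        have hD4 : D = -(4 * (ℓ : ℤ)) := by rw [hDval]; ring
        have hlo2 : ℓ % 2 = 1 := Nat.odd_iff.mp hlodd
        have hl4 : ℓ % 4 = 1 := by
          rcases hDfund with ⟨h1, -⟩ | ⟨h0, -, h2 | h3⟩ <;> omega
        refine assemble ℓ hℓ D hb1 hb2 (8 * ℓ) (Nat.mul_ne_zero (by norm_num) hℓ.ne_zero)
          ((ZMod.chineseRemainder hcop8).symm (((3:ℕ) : ZMod 8), b)) ?_ ?_
        · exact (isUnit_pair' (by decide) hb0.isUnit).map (ZMod.chineseRemainder hcop8).symm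
        · intro p pp hp2 hpa
          obtain ⟨hp8, hpl⟩ := crt_components hcop8 hpa
          refine ⟨?_, hpl⟩
          have hodd : Odd p := pp.odd_of_ne_two (by omega)
          have hp8' : p % 8 = 3 := by
            have h3 : p % 8 = 3 % 8 := (ZMod.natCast_eq_natCast_iff _ _ _).mp hp8
            omega
          have hχ4 : ZMod.χ₄ (p : ZMod 4) = -1 := ZMod.χ₄_nat_three_mod_four (by omega)
          have hχ8 : ZMod.χ₈ (p : ZMod 8) = -1 := by
            rw [ZMod.χ₈_nat_mod_eight, hp8']; decide
          have hJl : jacobiSym ((ℓ:ℕ) : ℤ) p = -1 := by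
            rw [jacobiSym.quadratic_reciprocity_one_mod_four hl4 hodd,
              ← jacobiSym.legendreSym.to_jacobiSym]
            show quadraticChar (ZMod ℓ) ((p : ℤ) : ZMod ℓ) = -1
            rwa [Int.cast_natCast, hpl]
          rw [hDval, jacobiSym.mul_left, jacobiSym.mul_left, jacobiSym.pow_left,
            jacobiSym.at_neg_one hodd, jacobiSym.at_two hodd, hχ4, hχ8, hJl]
          norm_num
      · -- e = 3, use p ≡ 5 mod 8
        refine assemble ℓ hℓ D hb1 hb2 (8 * ℓ) (Nat.mul_ne_zero (by norm_num) hℓ.ne_zero)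
          ((ZMod.chineseRemainder hcop8).symm (((5:ℕ) : ZMod 8), b)) ?_ ?_
        · exact (isUnit_pair' (by decide) hb0.isUnit).map (ZMod.chineseRemainder hcop8).symm
        · intro p pp hp2 hpa
          obtain ⟨hp8, hpl⟩ := crt_components hcop8 hpa
          refine ⟨?_, hpl⟩
          have hodd : Odd p := pp.odd_of_ne_two (by omega)
          have hp8' : p % 8 = 5 := by
            have h3 : p % 8 = 5 % 8 := (ZMod.natCast_eq_natCast_iff _ _ _).mp hp8
            omega
          have hχ4 : ZMod.χ₄ (p : ZMod 4) = 1 := ZMod.χ₄_nat_one_mod_four (by omega)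
          have hχ8 : ZMod.χ₈ (p : ZMod 8) = -1 := by
            rw [ZMod.χ₈_nat_mod_eight, hp8']; decide
          have hJl : jacobiSym ((ℓ:ℕ) : ℤ) p = -1 := by
            rw [jacobiSym.quadratic_reciprocity_one_mod_four' hlodd (by omega),
              ← jacobiSym.legendreSym.to_jacobiSym]
            show quadraticChar (ZMod ℓ) ((p : ℤ) : ZMod ℓ) = -1
            rwa [Int.cast_natCast, hpl]
          rw [hDval, jacobiSym.mul_left, jacobiSym.mul_left, jacobiSym.pow_left,
            jacobiSym.at_neg_one hodd, jacobiSym.at_two hodd, hχ4, hχ8, hJl]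
          norm_num
    · -- B1 : m' has an odd prime factor q₀
      obtain ⟨q₀, hq₀, hq₀d⟩ := Nat.exists_prime_and_dvd hm1
      obtain ⟨t, rfl⟩ := hq₀d
      haveI : Fact q₀.Prime := ⟨hq₀⟩
      have hq₀odd : Odd q₀ := (Nat.odd_mul.mp hm'odd).1
      have htodd : Odd t := (Nat.odd_mul.mp hm'odd).2
      have ht0 : t ≠ 0 := by rintro rfl; exact hm'0 (mul_zero q₀)
      have hq3 : 3 ≤ q₀ := by
        have := hq₀.two_le
        rcases Nat.lt_or_ge q₀ 3 with h | h
        · interval_cases q₀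
          · exact absurd hq₀odd (by decide)
        · exact h
      have hq₀t : Nat.Coprime q₀ t :=
        (hq₀.coprime_iff_not_dvd).mpr fun h => hq₀.not_isUnit (hm'sq q₀ (mul_dvd_mul_left q₀ h))
      have hlqt : Nat.Coprime ℓ (q₀ * t) := (hℓ.coprime_iff_not_dvd).mpr hldm'
      have hcop8 : Nat.Coprime 8 (ℓ * (q₀ * t)) := by
        have h1 : Nat.Coprime 2 (ℓ * (q₀ * t)) := Nat.coprime_two_left.mpr hmodd
        exact (show (8:ℕ) = 2 ^ 3 by norm_num) ▸ h1.pow_left 3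
      have hcharq : ringChar (ZMod q₀) ≠ 2 := by
        rw [ZMod.ringChar_zmod_n]; omega
      obtain ⟨n, hn⟩ := quadraticChar_exists_neg_one (F := ZMod q₀) hcharq
      have hn0 : n ≠ 0 := by intro h; rw [h] at hn; simp at hn
      have hDval : D = (-1) * ((2:ℤ) ^ e * ((ℓ:ℤ) * ((q₀:ℤ) * (t:ℤ)))) := by
        have h1 : (D.natAbs : ℤ) = (2:ℤ) ^ e * ((ℓ:ℤ) * ((q₀:ℤ) * (t:ℤ))) := by
          rw [habs]; push_cast; ring
        rw [h1] at hDabs; linarith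
      refine assemble ℓ hℓ D hb1 hb2 (8 * (ℓ * (q₀ * t)))
        (Nat.mul_ne_zero (by norm_num)
          (Nat.mul_ne_zero hℓ.ne_zero (Nat.mul_ne_zero hq₀.ne_zero ht0)))
        ((ZMod.chineseRemainder hcop8).symm
          (((1:ℕ) : ZMod 8), (ZMod.chineseRemainder hlqt).symm
            (b, (ZMod.chineseRemainder hq₀t).symm (n, 1)))) ?_ ?_
      · refine IsUnit.map (ZMod.chineseRemainder hcop8).symm (isUnit_pair' (by decide) ?_)
        refine IsUnit.map (ZMod.chineseRemainder hlqt).symm (isUnit_pair' hb0.isUnit ?_)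
        exact IsUnit.map (ZMod.chineseRemainder hq₀t).symm (isUnit_pair' hn0.isUnit isUnit_one)
      · intro p pp hp2 hpa
        obtain ⟨hp8, hrest⟩ := crt_components hcop8 hpa
        obtain ⟨hpl, hrest2⟩ := crt_components hlqt hrest
        obtain ⟨hpq, hpt⟩ := crt_components hq₀t hrest2
        refine ⟨?_, hpl⟩
        have hodd : Odd p := pp.odd_of_ne_two (by omega)
        have hp8' : p % 8 = 1 := by
          have h3 : p % 8 = 1 % 8 := (ZMod.natCast_eq_natCast_iff _ _ _).mp hp8
          omega
        have hp4 : p % 4 = 1 := by omega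
        have hχ4 : ZMod.χ₄ (p : ZMod 4) = 1 := ZMod.χ₄_nat_one_mod_four hp4
        have hχ8 : ZMod.χ₈ (p : ZMod 8) = 1 := by
          rw [ZMod.χ₈_nat_mod_eight, hp8']; decide
        have hJl : jacobiSym ((ℓ:ℕ) : ℤ) p = -1 := by
          rw [jacobiSym.quadratic_reciprocity_one_mod_four' hlodd hp4,
            ← jacobiSym.legendreSym.to_jacobiSym]
          show quadraticChar (ZMod ℓ) ((p : ℤ) : ZMod ℓ) = -1
          rwa [Int.cast_natCast, hpl]
        have hJq : jacobiSym ((q₀:ℕ) : ℤ) p = -1 := by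
          rw [jacobiSym.quadratic_reciprocity_one_mod_four' hq₀odd hp4,
            ← jacobiSym.legendreSym.to_jacobiSym]
          show quadraticChar (ZMod q₀) ((p : ℤ) : ZMod q₀) = -1
          rwa [Int.cast_natCast, hpq]
        have hJt : jacobiSym ((t:ℕ) : ℤ) p = 1 := by
          rw [jacobiSym.quadratic_reciprocity_one_mod_four' htodd hp4]
          have h3 : p % t = 1 % t := (ZMod.natCast_eq_natCast_iff p 1 t).mp (by rwa [Nat.cast_one])
          have h4 : ((p:ℕ) : ℤ) % (t:ℕ) = ((1:ℕ) : ℤ) % (t:ℕ) := by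
            rw [← Int.natCast_mod, ← Int.natCast_mod]; exact_mod_cast h3
          rw [jacobiSym.mod_left' h4, Nat.cast_one, jacobiSym.one_left]
        rw [hDval, jacobiSym.mul_left, jacobiSym.mul_left, jacobiSym.mul_left,
          jacobiSym.mul_left, jacobiSym.pow_left, jacobiSym.at_neg_one hodd,
          jacobiSym.at_two hodd, hχ4, hχ8, hJl, hJq, hJt]
        norm_num
  · -- Case A : ℓ ∤ D
    set M := 4 * D.natAbs with hM
    have hM4 : 4 ≤ M := by omega
    have hcop : Nat.Coprime M ℓ := by
      refine Nat.Coprime.symm ((hℓ.coprime_iff_not_dvd).mpr ?_)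
      intro h
      rcases (Nat.Prime.dvd_mul hℓ).mp h with h4 | hDa
      · have := Nat.le_of_dvd (by norm_num) h4; omega
      · exact hld (Int.dvd_natAbs.mp (Int.natCast_dvd_natCast.mpr hDa))
    refine assemble ℓ hℓ D hb1 hb2 (M * ℓ) (Nat.mul_ne_zero (by omega) hℓ.ne_zero)
      ((ZMod.chineseRemainder hcop).symm (1, b)) ?_ ?_
    · exact (isUnit_pair' isUnit_one hb0.isUnit).map (ZMod.chineseRemainder hcop).symm
    · intro p pp hp2 hpa
      obtain ⟨hpM, hpl⟩ := crt_components hcop hpa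
      refine ⟨?_, hpl⟩
      have hodd : Odd p := pp.odd_of_ne_two (by omega)
      have hmod : p % M = 1 := by
        have h1 : (p : ZMod M) = ((1 : ℕ) : ZMod M) := by rwa [Nat.cast_one]
        have h3 : p % M = 1 % M := (ZMod.natCast_eq_natCast_iff _ _ _).mp h1
        rwa [Nat.mod_eq_of_lt (show (1:ℕ) < M by omega)] at h3
      calc jacobiSym D p = jacobiSym D (p % (4 * D.natAbs)) := jacobiSym.mod_right D hodd
        _ = 1 := by rw [← hM, hmod, jacobiSym.one_right]
end
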